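/- arXiv:1910.03444 — 2 statements merged into one kernel-verified Lean document; each statement's English description precedes it below -/
import Mathlib

section
/- The ratio (x+1) b(x+1)/b(x) is strictly decreasing on the support of b: for every integer x ≥ 0 with b(x) > 0 and b(x+1) > 0, one has (x+2) b(x+2) / b(x+1) < (x+1) b(x+1) / b(x); equivalently (x+2) b(x+2) b(x) < (x+1) b(x+1)². -/
/-!
Write `q i = p i / (1 - p i)`. Pulling the convergent product `C = ∏ₖ (1 - p k)` out of every
term gives `b(y) = C · e_y(q)`, where `e_y(q) = ∑_{#J = y} ∏_{i ∈ J} q i` is the elementary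
symmetric function of the infinite family `q`, so the claim is Newton's inequality
`(x + 2) e_x e_{x+2} < (x + 1) e_{x+1}²`. Splitting a pair `(A, B)` into `D = A ∩ B`,
`E = A ∆ B` and `S = A \ B ⊆ E` expands `e_a e_b` as `∑_{D, E disjoint} N · (∏_D q)² ∏_E q`, where
`N` counts the admissible `S` and is a binomial coefficient in `#D` and `#E`. Comparing these
coefficients reduces the inequality to `(x + 2) C(2r, r - 1) ≤ (x + 1) C(2r, r)` for
`r = x + 1 - #D`; it is strict because the terms with `E = ∅`, `#D = x + 1` occur only in
`e_{x+1}²`.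
-/

open scoped BigOperators

/-- Poisson probability mass function with parameter `l`. -/
noncomputable def poissonPMF (l : ℝ) (x : ℕ) : ℝ :=
  Real.exp (-l) * l ^ x / (Nat.factorial x)

/-- Poisson binomial probability mass function:
`b(x) = Σ_{J ⊆ ℕ, #J = x} ∏_{i ∈ J} p i · ∏_{k ∉ J} (1 - p k)`. -/
noncomputable def pb (p : ℕ → ℝ) (x : ℕ) : ℝ :=
  ∑' J : {J : Finset ℕ // J.card = x},
    (∏ i ∈ (J : Finset ℕ), p i) * ∏' k : {k : ℕ // k ∉ (J : Finset ℕ)}, (1 - p k)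

open Finset
open scoped ENNReal symmDiff

/-- The number of `S ⊆ E` with `d + #S = a` and `d + #(E \ S) = b` when `#E = m`. -/
def splitCount (a b d m : ℕ) : ℕ :=
  if d ≤ a ∧ m + 2 * d = a + b then m.choose (a - d) else 0

lemma succ_succ_mul_splitCount_le (x d m : ℕ) :
    (x + 2) * splitCount x (x + 2) d m ≤ (x + 1) * splitCount (x + 1) (x + 1) d m := by
  unfold splitCount
  split_ifs with h₁ h₂
  · obtain ⟨r, rfl, rfl⟩ : ∃ r, x = d + r ∧ m = 2 * (r + 1) := ⟨x - d, by omega, by omega⟩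
    rw [show d + r - d = r by omega, show d + r + 1 - d = r + 1 by omega]
    have hsucc := Nat.choose_succ_right_eq (2 * (r + 1)) r
    rw [show 2 * (r + 1) - r = r + 2 by omega] at hsucc
    refine Nat.le_of_mul_le_mul_right ?_ (Nat.succ_pos r)
    calc (d + r + 2) * (2 * (r + 1)).choose r * (r + 1)
        ≤ (d + r + 1) * ((2 * (r + 1)).choose r * (r + 2)) := by
          nlinarith [Nat.zero_le (d * (2 * (r + 1)).choose r)]
      _ = (d + r + 1) * (2 * (r + 1)).choose (r + 1) * (r + 1) := by rw [← hsucc]; ring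
  · omega
  · simp
  · simp

section ElementarySymmetric

variable {α : Type*}

noncomputable def esymmTsum (q : α → ℝ≥0∞) (k : ℕ) : ℝ≥0∞ :=
  ∑' J : {J : Finset α // #J = k}, ∏ i ∈ J, q i

lemma esymmTsum_eq_tsum_ite (q : α → ℝ≥0∞) (k : ℕ) :
    esymmTsum q k = ∑' J : Finset α, if #J = k then ∏ i ∈ J, q i else 0 :=
  (tsum_subtype {J : Finset α | #J = k} fun J => ∏ i ∈ J, q i).trans
    (tsum_congr fun _ => Set.indicator_apply _ _ _)

lemma exists_prod_ne_zero_of_esymmTsum_ne_zero {q : α → ℝ≥0∞} {k : ℕ}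
    (h : esymmTsum q k ≠ 0) : ∃ J : Finset α, #J = k ∧ ∏ i ∈ J, q i ≠ 0 := by
  by_contra! hall
  exact h (ENNReal.tsum_eq_zero.mpr fun J => hall J.1 J.2)

variable [DecidableEq α]

lemma prod_mul_prod_eq_sq_inter_mul_symmDiff {M : Type*} [CommMonoid M] (f : α → M)
    (A B : Finset α) :
    (∏ i ∈ A, f i) * ∏ i ∈ B, f i = (∏ i ∈ A ∩ B, f i) ^ 2 * ∏ i ∈ A ∆ B, f i := by
  have hunion : A ∆ B ∪ A ∩ B = A ∪ B := symmDiff_sup_inf A B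
  have hdisj : Disjoint (A ∆ B) (A ∩ B) := disjoint_symmDiff_inf A B
  rw [← prod_union_inter, ← hunion, prod_union hdisj, sq]
  ac_rfl

def splitPair (AB : Finset α × Finset α) : (Finset α × Finset α) × Finset α :=
  ((AB.1 ∩ AB.2, AB.1 ∆ AB.2), AB.1 \ AB.2)

lemma splitPair_injective : Function.Injective (splitPair (α := α)) := by
  refine Function.LeftInverse.injective (g := fun t => (t.1.1 ∪ t.2, t.1.1 ∪ (t.1.2 \ t.2))) ?_
  rintro ⟨A, B⟩
  ext a <;> simp only [splitPair, mem_union, mem_inter, mem_sdiff, mem_symmDiff] <;> tauto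

lemma mem_range_splitPair {D E S : Finset α} (hDE : Disjoint D E) (hSE : S ⊆ E) :
    ((D, E), S) ∈ Set.range (splitPair (α := α)) := by
  refine ⟨(D ∪ S, D ∪ (E \ S)), ?_⟩
  have hD : ∀ a ∈ D, a ∉ E := fun a h => disjoint_left.mp hDE h
  have hS : ∀ a ∈ S, a ∈ E := fun a h => hSE h
  ext a <;> simp only [splitPair, mem_union, mem_inter, mem_sdiff, mem_symmDiff] <;>
    have := hD a <;> have := hS a <;> tauto

lemma card_filter_powerset_eq_splitCount (a b d : ℕ) (E : Finset α) :
    #{S ∈ E.powerset | d + #S = a ∧ d + #(E \ S) = b} = splitCount a b d #E := by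
  have hcard : ∀ S ∈ E.powerset, #S ≤ #E ∧ #(E \ S) = #E - #S := fun S hS =>
    ⟨card_le_card (mem_powerset.mp hS), card_sdiff_of_subset (mem_powerset.mp hS)⟩
  unfold splitCount
  split_ifs with h
  · rw [← card_powersetCard, powersetCard_eq_filter]
    congr 1
    refine filter_congr fun S hS => ?_
    have := hcard S hS
    omega
  · rw [card_eq_zero, filter_eq_empty_iff]
    intro S hS
    have := hcard S hS
    omega

def pairCount (a b : ℕ) (D E : Finset α) : ℕ :=
  if Disjoint D E then splitCount a b #D #E else 0

lemma esymmTsum_mul_esymmTsum (q : α → ℝ≥0∞) (a b : ℕ) :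
    esymmTsum q a * esymmTsum q b = ∑' DE : Finset α × Finset α,
      (pairCount a b DE.1 DE.2 : ℝ≥0∞) * ((∏ i ∈ DE.1, q i) ^ 2 * ∏ i ∈ DE.2, q i) := by
  set g : (Finset α × Finset α) × Finset α → ℝ≥0∞ := fun t =>
    if Disjoint t.1.1 t.1.2 ∧ t.2 ⊆ t.1.2 ∧ #t.1.1 + #t.2 = a ∧ #t.1.1 + #(t.1.2 \ t.2) = b
    then (∏ i ∈ t.1.1, q i) ^ 2 * ∏ i ∈ t.1.2, q i else 0 with hg
  -- `g` is the summand of `e_a e_b`, transported along `splitPair`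
  have hpair : esymmTsum q a * esymmTsum q b = ∑' AB, g (splitPair AB) := by
    rw [esymmTsum_eq_tsum_ite, esymmTsum_eq_tsum_ite, ← ENNReal.tsum_mul_right,
      ENNReal.tsum_prod']
    refine tsum_congr fun A => ?_
    rw [← ENNReal.tsum_mul_left]
    refine tsum_congr fun B => ?_
    have hdisj : Disjoint (A ∩ B) (A ∆ B) := (disjoint_symmDiff_inf A B).symm
    have hA : #(A ∩ B) + #(A \ B) = #A := card_inter_add_card_sdiff A B
    have hB : #(A ∩ B) + #(A ∆ B \ (A \ B)) = #B := by
      rw [Finset.symmDiff_def, union_sdiff_cancel_left disjoint_sdiff_sdiff, inter_comm]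
      exact card_inter_add_card_sdiff B A
    simp only [hg, splitPair, hdisj, symmDiff_subset_sdiff, true_and, hA, hB,
      ← prod_mul_prod_eq_sq_inter_mul_symmDiff]
    split_ifs <;> simp_all
  have hsupp : Function.support g ⊆ Set.range splitPair := by
    rintro ⟨⟨D, E⟩, S⟩ ht
    by_cases h : Disjoint D E ∧ S ⊆ E
    · exact mem_range_splitPair h.1 h.2
    · exact absurd (if_neg fun hc => h ⟨hc.1, hc.2.1⟩) ht
  rw [hpair, splitPair_injective.tsum_eq hsupp, ENNReal.tsum_prod']
  refine tsum_congr fun ⟨D, E⟩ => ?_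
  have hvanish : ∀ S ∉ E.powerset, g ((D, E), S) = 0 := fun S hS =>
    if_neg fun h => hS (mem_powerset.mpr h.2.1)
  rw [tsum_eq_sum hvanish, pairCount]
  split_ifs with hDE
  · rw [← card_filter_powerset_eq_splitCount, ← nsmul_eq_mul, ← sum_const, sum_filter]
    refine sum_congr rfl fun S hS => ?_
    simp only [hg, hDE, mem_powerset.mp hS, true_and]
  · simp [hg, hDE]

lemma succ_succ_mul_pairCount_mul_le (x : ℕ) (D E : Finset α) (w : ℝ≥0∞) :
    ((x + 2 : ℕ) : ℝ≥0∞) * (pairCount x (x + 2) D E * w) ≤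
      ((x + 1 : ℕ) : ℝ≥0∞) * (pairCount (x + 1) (x + 1) D E * w) := by
  rw [← mul_assoc, ← mul_assoc]
  refine mul_le_mul_of_nonneg_right ?_ zero_le
  unfold pairCount
  split_ifs
  · exact_mod_cast succ_succ_mul_splitCount_le x _ _
  · simp

theorem esymmTsum_newton_strict (q : α → ℝ≥0∞) (x : ℕ) (h0 : esymmTsum q (x + 1) ≠ 0)
    (htop : esymmTsum q (x + 1) ≠ ∞) :
    ((x + 2 : ℕ) : ℝ≥0∞) * (esymmTsum q x * esymmTsum q (x + 2)) <
      ((x + 1 : ℕ) : ℝ≥0∞) * esymmTsum q (x + 1) ^ 2 := by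
  have hfin : ((x + 1 : ℕ) : ℝ≥0∞) * esymmTsum q (x + 1) ^ 2 ≠ ∞ := by finiteness
  rw [sq, esymmTsum_mul_esymmTsum, ← ENNReal.tsum_mul_left] at hfin ⊢
  rw [esymmTsum_mul_esymmTsum, ← ENNReal.tsum_mul_left]
  have hterm := fun DE : Finset α × Finset α => succ_succ_mul_pairCount_mul_le x DE.1 DE.2
    ((∏ i ∈ DE.1, q i) ^ 2 * ∏ i ∈ DE.2, q i)
  obtain ⟨D₀, hD₀, hq⟩ := exists_prod_ne_zero_of_esymmTsum_ne_zero h0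
  -- the pair `(D₀, ∅)` occurs in `e_{x+1}²` but not in `e_x e_{x+2}`
  refine ENNReal.tsum_lt_tsum (ne_top_of_le_ne_top hfin (ENNReal.tsum_le_tsum hterm)) hterm
    (i := (D₀, ∅)) ?_
  simp [pairCount, splitCount, hD₀, two_mul, pos_iff_ne_zero, hq]

end ElementarySymmetric

lemma Real.multipliable_one_sub_of_summable {ι : Type*} {f : ι → ℝ} (hf : Summable f) :
    Multipliable fun i => 1 - f i := by
  simpa [sub_eq_add_neg] using Real.multipliable_one_add_of_summable hf.neg

lemma pb_eq_tprod_mul_esymmTsum {p : ℕ → ℝ} (hp : ∀ i, p i ∈ Set.Ico (0 : ℝ) 1)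
    (hsum : Summable p) (y : ℕ) :
    pb p y = (∏' k, (1 - p k)) *
      (esymmTsum (fun i => ENNReal.ofReal (p i / (1 - p i))) y).toReal := by
  have hpos : ∀ i, 0 < 1 - p i := fun i => sub_pos.mpr (hp i).2
  have hterm : ∀ J : Finset ℕ, (∏ i ∈ J, p i) * ∏' k : {k // k ∉ J}, (1 - p k) =
      (∏' k, (1 - p k)) * ∏ i ∈ J, p i / (1 - p i) := fun J => by
    have hsplit := Multipliable.tprod_mul_tprod_compl (f := fun k => 1 - p k) (s := ↑J)
      (Real.multipliable_one_sub_of_summable (hsum.subtype _))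
      (Real.multipliable_one_sub_of_summable (hsum.subtype _))
    have hcancel : (∏ i ∈ J, (1 - p i)) * ∏ i ∈ J, p i / (1 - p i) = ∏ i ∈ J, p i := by
      rw [← prod_mul_distrib]
      exact prod_congr rfl fun i _ => mul_div_cancel₀ (p i) (hpos i).ne'
    rw [Finset.tprod_subtype' J (fun k => 1 - p k)] at hsplit
    rw [← hsplit, mul_right_comm, hcancel]
    rfl
  rw [pb, tsum_congr fun J : {J : Finset ℕ // #J = y} => hterm J.1, tsum_mul_left, esymmTsum,
    ENNReal.tsum_toReal_eq fun J => ENNReal.prod_ne_top fun i _ => ENNReal.ofReal_ne_top]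
  congr 1
  refine tsum_congr fun J => ?_
  rw [ENNReal.toReal_prod]
  exact prod_congr rfl fun i _ => (ENNReal.toReal_ofReal (div_nonneg (hp i).1 (hpos i).le)).symm

theorem stmt_9_general (p : ℕ → ℝ) (hp : ∀ i, p i ∈ Set.Ico (0 : ℝ) 1) (hsum : Summable p)
    (x : ℕ) (hx : 0 < pb p x) (hx1 : 0 < pb p (x + 1)) :
    ((x : ℝ) + 2) * pb p (x + 2) / pb p (x + 1) < ((x : ℝ) + 1) * pb p (x + 1) / pb p x := by
  set e := esymmTsum fun i => ENNReal.ofReal (p i / (1 - p i))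
  set C := ∏' k, (1 - p k)
  have hpb : ∀ y, pb p y = C * (e y).toReal := pb_eq_tprod_mul_esymmTsum hp hsum
  simp only [hpb] at hx hx1 ⊢
  have hC : 0 < C := pos_of_mul_pos_left hx ENNReal.toReal_nonneg
  obtain ⟨he₁, htop⟩ := ENNReal.toReal_pos_iff.mp (pos_of_mul_pos_right hx1 hC.le)
  have hnewton := esymmTsum_newton_strict _ x he₁.ne' htop.ne
  have hreal : ((x : ℝ) + 2) * ((e x).toReal * (e (x + 2)).toReal) <
      ((x : ℝ) + 1) * (e (x + 1)).toReal ^ 2 := by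
    have := (ENNReal.toReal_lt_toReal hnewton.ne_top (by finiteness)).mpr hnewton
    simp only [ENNReal.toReal_mul, ENNReal.toReal_pow, ENNReal.toReal_natCast] at this
    exact_mod_cast this
  rw [div_lt_div_iff₀ hx1 hx]
  linear_combination C ^ 2 * hreal

/-- The ratio `(x+1) b(x+1)/b(x)` is strictly decreasing on the support of `b`. -/
theorem stmt_9 (p : ℕ → ℝ) (hp : ∀ i, p i ∈ Set.Ico (0 : ℝ) 1) (hsum : Summable p)
    (l : ℝ) (hl : l = ∑' i, p i) (hlpos : 0 < l)
    (x : ℕ) (hx : 0 < pb p x) (hx1 : 0 < pb p (x + 1)) :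
    ((x : ℝ) + 2) * pb p (x + 2) / pb p (x + 1) < ((x : ℝ) + 1) * pb p (x + 1) / pb p x :=
  stmt_9_general p hp hsum x hx hx1
end

section
/- For any integer x ≥ 1 with b(x−1) > 0 and b(x) > 0: if x b(x) ≥ λ b(x−1), then (x+1) b(x+1) ≥ (λ − p*/(1 − p*)) · b(x). -/
/-!
Write `q i = p i / (1 - p i)`. Then `b x = (∏' k, (1 - p k)) * e_x`, where `e_x` is the `x`-th
elementary symmetric function of the `q i`, the limit of its finite truncations.

For finitely many variables, with `e^i` the elementary symmetric functions without the `i`-th one,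
`(k + 1) e_{k+1}² - (k + 2) e_{k+2} e_k = ∑ᵢ qᵢ aᵢ` where `aᵢ = e^i_k e_{k+1} - e^i_{k+1} e_k`.
Each `aᵢ` is nonnegative by the log-concavity `e_k e_{k+2} ≤ e_{k+1}²`, and `∑ᵢ aᵢ = e_k e_{k+1}`,
so `qᵢ ≤ q* := p* / (1 - p*)` gives `(k + 1) e_{k+1}² ≤ (k + 2) e_{k+2} e_k + q* e_{k+1} e_k`.
This inequality passes to the limit and, being homogeneous of degree two, to `b`. Multiplying
`λ b(x-1) ≤ x b(x)` by `b x` and dividing the result by `b(x-1) > 0` gives the claim.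
-/

open scoped BigOperators

namespace PoissonBinomial

open Filter Topology Finset

section Finite

variable {ι : Type*} (f : ι → ℝ)

def esymm (s : Finset ι) (k : ℕ) : ℝ :=
  ∑ J ∈ s.powersetCard k, ∏ i ∈ J, f i

@[simp]
lemma esymm_zero (s : Finset ι) : esymm f s 0 = 1 := by
  simp [esymm]

@[simp]
lemma esymm_empty_succ (k : ℕ) : esymm f ∅ (k + 1) = 0 := by
  rw [esymm, powersetCard_eq_empty.2 (by simp), sum_empty]

lemma esymm_insert [DecidableEq ι] {a : ι} {s : Finset ι} (ha : a ∉ s) (k : ℕ) :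
    esymm f (insert a s) (k + 1) = esymm f s (k + 1) + f a * esymm f s k := by
  have hnot : ∀ J ∈ s.powersetCard k, a ∉ J := fun J hJ h => ha ((mem_powersetCard.1 hJ).1 h)
  have hinj : Set.InjOn (insert a) (s.powersetCard k : Set (Finset ι)) := fun J hJ J' hJ' h => by
    rw [← erase_insert (hnot J hJ), ← erase_insert (hnot J' hJ'), h]
  have hdisj : Disjoint (s.powersetCard (k + 1)) ((s.powersetCard k).image (insert a)) := by
    refine disjoint_right.2 fun J hJ hJs => ?_
    obtain ⟨K, -, rfl⟩ := mem_image.1 hJ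
    exact ha ((mem_powersetCard.1 hJs).1 (mem_insert_self a K))
  rw [esymm, powersetCard_succ_insert ha, sum_union hdisj, sum_image hinj, esymm, esymm, mul_sum]
  exact congrArg _ (sum_congr rfl fun J hJ => prod_insert (hnot J hJ))

lemma esymm_erase [DecidableEq ι] {i : ι} {s : Finset ι} (hi : i ∈ s) (k : ℕ) :
    esymm f s (k + 1) = esymm f (s.erase i) (k + 1) + f i * esymm f (s.erase i) k := by
  conv_lhs => rw [← insert_erase hi]
  exact esymm_insert f (notMem_erase i s) k

variable {f}

lemma esymm_nonneg (hf : ∀ i, 0 ≤ f i) (s : Finset ι) (k : ℕ) : 0 ≤ esymm f s k :=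
  sum_nonneg fun _ _ => prod_nonneg fun i _ => hf i

theorem esymm_mul_esymm_succ_le_of_le [DecidableEq ι] (hf : ∀ i, 0 ≤ f i) (s : Finset ι) {k l : ℕ}
    (hkl : k ≤ l) : esymm f s k * esymm f s (l + 1) ≤ esymm f s (k + 1) * esymm f s l := by
  induction s using Finset.induction_on generalizing k l with
  | empty => simp
  | insert a s ha ih =>
    have hc := hf a
    have he := esymm_nonneg hf s
    rcases k with _ | k <;> rcases l with _ | l
    · simp [mul_comm]
    · simp only [esymm_zero, esymm_insert f ha, one_mul, zero_add, mul_one]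
      have := ih (Nat.zero_le (l + 1))
      simp only [esymm_zero, one_mul, zero_add] at this
      nlinarith [mul_nonneg hc (mul_nonneg (he 1) (he l)), mul_nonneg (mul_nonneg hc hc) (he l)]
    · omega
    · have hkl' : k ≤ l := by omega
      have h0 := ih (k := k + 1) (l := l + 1) (by omega)
      have h2 := ih hkl'
      have h1 : esymm f s k * esymm f s (l + 2) ≤ esymm f s (k + 2) * esymm f s l := by
        rcases hkl'.eq_or_lt with rfl | hlt
        · rw [mul_comm]
        · exact (ih (l := l + 1) (by omega)).trans (ih (k := k + 1) hlt)
      simp only [esymm_insert f ha]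
      nlinarith [h0, mul_le_mul_of_nonneg_left h1 hc,
        mul_le_mul_of_nonneg_left h2 (mul_nonneg hc hc)]

lemma esymm_erase_succ_mul_le [DecidableEq ι] (hf : ∀ i, 0 ≤ f i) {i : ι} {s : Finset ι}
    (hi : i ∈ s) (k : ℕ) :
    esymm f (s.erase i) (k + 1) * esymm f s k ≤ esymm f (s.erase i) k * esymm f s (k + 1) := by
  rw [esymm_erase f hi k]
  rcases k with _ | m
  · simp [hf i]
  · rw [esymm_erase f hi m]
    have := esymm_mul_esymm_succ_le_of_le hf (s.erase i) (Nat.le_succ m)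
    nlinarith [mul_le_mul_of_nonneg_left this (hf i)]

variable (f)

lemma sum_esymm_sub_esymm_erase [DecidableEq ι] (s : Finset ι) (k : ℕ) :
    ∑ i ∈ s, (esymm f s k - esymm f (s.erase i) k) = k * esymm f s k := by
  induction s using Finset.induction_on generalizing k with
  | empty => rcases k with _ | k <;> simp
  | insert a s ha ih =>
    rcases k with _ | m
    · simp
    have hterm : ∀ i ∈ s, esymm f (insert a s) (m + 1) - esymm f ((insert a s).erase i) (m + 1)
        = (esymm f s (m + 1) - esymm f (s.erase i) (m + 1))
          + f a * (esymm f s m - esymm f (s.erase i) m) := fun i hi => by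
      rw [erase_insert_of_ne (ne_of_mem_of_not_mem hi ha).symm, esymm_insert f ha,
        esymm_insert f fun h => ha (mem_of_mem_erase h)]
      ring
    rw [sum_insert ha, erase_insert ha, sum_congr rfl hterm, sum_add_distrib, ← mul_sum, ih, ih,
      esymm_insert f ha]
    push_cast
    ring

lemma sum_mul_esymm_erase [DecidableEq ι] (s : Finset ι) (k : ℕ) :
    ∑ i ∈ s, f i * esymm f (s.erase i) k = (k + 1) * esymm f s (k + 1) := by
  have h := sum_esymm_sub_esymm_erase f s (k + 1)
  push_cast at h
  rw [← h]
  exact sum_congr rfl fun i hi => by rw [esymm_erase f hi]; ring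

variable {f}

theorem succ_mul_esymm_sq_le [DecidableEq ι] (hf : ∀ i, 0 ≤ f i) {c : ℝ} {s : Finset ι}
    (hfc : ∀ i ∈ s, f i ≤ c) (k : ℕ) :
    (k + 1) * esymm f s (k + 1) ^ 2
      ≤ (k + 2) * esymm f s (k + 2) * esymm f s k + c * esymm f s (k + 1) * esymm f s k := by
  set e := esymm f s
  set a : ι → ℝ := fun i => esymm f (s.erase i) k * e (k + 1) - esymm f (s.erase i) (k + 1) * e k
  have ha : ∀ i ∈ s, 0 ≤ a i := fun i hi => sub_nonneg.2 (esymm_erase_succ_mul_le hf hi k)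
  have hsum_a : ∑ i ∈ s, a i = e k * e (k + 1) := by
    have h1 := sum_esymm_sub_esymm_erase f s k
    have h2 := sum_esymm_sub_esymm_erase f s (k + 1)
    calc ∑ i ∈ s, a i
        = (∑ i ∈ s, (e (k + 1) - esymm f (s.erase i) (k + 1))) * e k
          - (∑ i ∈ s, (e k - esymm f (s.erase i) k)) * e (k + 1) := by
          rw [sum_mul, sum_mul, ← sum_sub_distrib]
          exact sum_congr rfl fun i _ => by ring
      _ = e k * e (k + 1) := by rw [h1, h2]; push_cast; ring
  have hsum_fa : ∑ i ∈ s, f i * a i = (k + 1) * e (k + 1) ^ 2 - (k + 2) * e (k + 2) * e k := by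
    calc ∑ i ∈ s, f i * a i
        = (∑ i ∈ s, f i * esymm f (s.erase i) k) * e (k + 1)
          - (∑ i ∈ s, f i * esymm f (s.erase i) (k + 1)) * e k := by
          rw [sum_mul, sum_mul, ← sum_sub_distrib]
          exact sum_congr rfl fun i _ => by ring
      _ = _ := by rw [sum_mul_esymm_erase, sum_mul_esymm_erase]; push_cast; ring
  have : ∑ i ∈ s, f i * a i ≤ c * ∑ i ∈ s, a i := by
    rw [mul_sum]
    exact sum_le_sum fun i hi => mul_le_mul_of_nonneg_right (hfc i hi) (ha i hi)
  rw [hsum_a, hsum_fa] at this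
  linarith

end Finite

section Infinite

variable {ι : Type*}

noncomputable def tsumEsymm (f : ι → ℝ) (k : ℕ) : ℝ :=
  ∑' J : {J : Finset ι // J.card = k}, ∏ i ∈ (J : Finset ι), f i

variable {f : ι → ℝ}

lemma tendsto_esymm_tsumEsymm (hf : ∀ i, 0 ≤ f i) (hfs : Summable f) (k : ℕ) :
    Tendsto (fun s => esymm f s k) atTop (𝓝 (tsumEsymm f k)) := by
  classical
  have hsum : HasSum (fun J : {J : Finset ι // J.card = k} => ∏ i ∈ (J : Finset ι), f i)
      (tsumEsymm f k) :=
    ((summable_finsetProd_of_summable_nonneg hf hfs).subtype {J | J.card = k}).hasSum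
  have hmono : Tendsto (fun s : Finset ι => (s.powersetCard k).subtype (fun J => J.card = k))
      atTop atTop := by
    refine tendsto_atTop_atTop_of_monotone (fun s t h => subtype_mono (powersetCard_mono h))
      fun T => ⟨T.biUnion Subtype.val, fun J hJ => ?_⟩
    rw [mem_subtype, mem_powersetCard]
    exact ⟨subset_biUnion_of_mem _ hJ, J.2⟩
  refine (hsum.comp hmono).congr fun s => ?_
  rw [Function.comp_apply, sum_subtype_eq_sum_filter (fun J => ∏ i ∈ J, f i), esymm,
    filter_true_of_mem fun J hJ => (mem_powersetCard.1 hJ).2]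

theorem succ_mul_tsumEsymm_sq_le (hf : ∀ i, 0 ≤ f i) (hfs : Summable f) {c : ℝ}
    (hfc : ∀ i, f i ≤ c) (k : ℕ) :
    (k + 1) * tsumEsymm f (k + 1) ^ 2
      ≤ (k + 2) * tsumEsymm f (k + 2) * tsumEsymm f k
        + c * tsumEsymm f (k + 1) * tsumEsymm f k := by
  classical
  have h := tendsto_esymm_tsumEsymm hf hfs
  exact le_of_tendsto_of_tendsto' (((h (k + 1)).pow 2).const_mul _)
    ((((h (k + 2)).const_mul _).mul (h k)).add (((h (k + 1)).const_mul c).mul (h k)))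
    fun s => succ_mul_esymm_sq_le hf (fun i _ => hfc i) k

end Infinite

lemma prod_mul_tprod_subtype_compl_of_summable_log {ι : Type*} {f : ι → ℝ} (hf : ∀ i, 0 < f i)
    (hlog : Summable fun i => Real.log (f i)) (s : Finset ι) :
    (∏ i ∈ s, f i) * ∏' i : {i // i ∉ s}, f i = ∏' i, f i := by
  have hlog_compl : Summable fun i : {i // i ∉ s} => Real.log (f i) := hlog.subtype _
  rw [← Real.rexp_tsum_eq_tprod hf hlog,
    ← Real.rexp_tsum_eq_tprod (fun i : {i // i ∉ s} => hf i) hlog_compl,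
    ← hlog.sum_add_tsum_subtype_compl s, Real.exp_add, Real.exp_sum]
  exact congrArg (· * _) (prod_congr rfl fun i _ => (Real.exp_log (hf i)).symm)

theorem pb_eq_tprod_mul_tsumEsymm {p : ℕ → ℝ} (hp : ∀ i, p i < 1) (hsum : Summable p) (m : ℕ) :
    pb p m = (∏' k, (1 - p k)) * tsumEsymm (fun i => p i / (1 - p i)) m := by
  have hpos : ∀ k, 0 < 1 - p k := fun k => sub_pos.2 (hp k)
  have hlog : Summable fun k => Real.log (1 - p k) := by
    simpa [sub_eq_add_neg] using Real.summable_log_one_add_of_summable hsum.neg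
  rw [pb, tsumEsymm, ← tsum_mul_left]
  refine tsum_congr fun J => ?_
  rw [← prod_mul_tprod_subtype_compl_of_summable_log hpos hlog J, prod_div_distrib]
  have : ∏ i ∈ (J : Finset ℕ), (1 - p i) ≠ 0 := prod_ne_zero_iff.2 fun i _ => (hpos i).ne'
  field_simp

theorem succ_mul_pb_sq_le {p : ℕ → ℝ} (hp : ∀ i, p i ∈ Set.Ico (0 : ℝ) 1) (hsum : Summable p)
    {pstar : ℝ} (hpstar : pstar < 1) (hle : ∀ i, p i ≤ pstar) (k : ℕ) :
    (k + 1) * pb p (k + 1) ^ 2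
      ≤ (k + 2) * pb p (k + 2) * pb p k + pstar / (1 - pstar) * pb p (k + 1) * pb p k := by
  have hq0 : ∀ i, 0 ≤ p i / (1 - p i) := fun i => div_nonneg (hp i).1 (sub_nonneg.2 (hp i).2.le)
  have hq_le : ∀ i, p i / (1 - p i) ≤ pstar / (1 - pstar) := fun i =>
    div_le_div₀ ((hp i).1.trans (hle i)) (hle i) (sub_pos.2 hpstar) (by linarith [hle i])
  have hq_sum : Summable fun i => p i / (1 - p i) :=
    (hsum.div_const (1 - pstar)).of_nonneg_of_le hq0 fun i =>
      div_le_div_of_nonneg_left (hp i).1 (sub_pos.2 hpstar) (by linarith [hle i])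
  have key := succ_mul_tsumEsymm_sq_le hq0 hq_sum hq_le k
  simp only [pb_eq_tprod_mul_tsumEsymm (fun i => (hp i).2) hsum]
  nlinarith [mul_le_mul_of_nonneg_left key (sq_nonneg (∏' k, (1 - p k)))]

end PoissonBinomial

open PoissonBinomial in
theorem stmt_14_general (p : ℕ → ℝ) (hp : ∀ i, p i ∈ Set.Ico (0 : ℝ) 1) (hsum : Summable p)
    (l : ℝ)
    (pstar : ℝ) (hpstar : IsGreatest (Set.range p) pstar)
    (x : ℕ) (hx1 : 1 ≤ x) (hbx' : 0 < pb p (x - 1)) (hbx : 0 < pb p x)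
    (hratio : l * pb p (x - 1) ≤ (x : ℝ) * pb p x) :
    (l - pstar / (1 - pstar)) * pb p x ≤ ((x : ℝ) + 1) * pb p (x + 1) := by
  obtain ⟨⟨i₀, rfl⟩, hle⟩ := hpstar
  obtain ⟨y, rfl⟩ : ∃ y, x = y + 1 := ⟨x - 1, by omega⟩
  rw [add_tsub_cancel_right] at hbx' hratio
  have key := succ_mul_pb_sq_le hp hsum (hp i₀).2 (fun i => hle ⟨i, rfl⟩) y
  push_cast at hratio key ⊢
  refine le_of_mul_le_mul_right ?_ hbx'
  nlinarith [mul_le_mul_of_nonneg_right hratio hbx.le]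

/-- If `x ≥ 1`, `b(x−1) > 0`, `b(x) > 0` and `x b(x) ≥ λ b(x−1)`, then
`(x+1) b(x+1) ≥ (λ − p*/(1 − p*)) b(x)`. -/
theorem stmt_14 (p : ℕ → ℝ) (hp : ∀ i, p i ∈ Set.Ico (0 : ℝ) 1) (hsum : Summable p)
    (l : ℝ) (hl : l = ∑' i, p i) (hlpos : 0 < l)
    (pstar : ℝ) (hpstar : IsGreatest (Set.range p) pstar)
    (x : ℕ) (hx1 : 1 ≤ x) (hbx' : 0 < pb p (x - 1)) (hbx : 0 < pb p x)
    (hratio : l * pb p (x - 1) ≤ (x : ℝ) * pb p x) :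
    (l - pstar / (1 - pstar)) * pb p x ≤ ((x : ℝ) + 1) * pb p (x + 1) :=
  stmt_14_general p hp hsum l pstar hpstar x hx1 hbx' hbx hratio
end
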